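/- arXiv:1105.4796 — 3 statements merged into one kernel-verified Lean document; each statement's English description precedes it below -/
import Mathlib

section
/- Let u be a Lyndon word of length at least 2 over a linearly ordered alphabet, and write u = vw where w is the longest proper suffix of u that is itself a Lyndon word. Then v is a Lyndon word. -/
/-!
Call `s` strongly below `y` if every extension of `s` is lexicographically smaller than `y`, i.e.
`s < y` at a letter rather than by `s` being a prefix of `y`. Lyndon words are unbordered, so a
nonempty word is Lyndon exactly when each of its proper suffixes is strongly below it (plain `<`
would not do: `a < aa`).

Let `s` be a proper suffix of `v`. As `s ++ w` is a proper suffix of `u`, the only way `s` can fail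
to be strongly below `v` is that `s` is a border of `v`, say `v = s ++ e`, and then `w` is strongly
below `e ++ w`. But whenever a Lyndon word `w` is strongly below `x ++ w`, the word `x' ++ w` is
Lyndon for the shortest nonempty suffix `x'` of `x` with `w` strongly below `x' ++ w`. This gives a
proper Lyndon suffix of `u` longer than `w`.
-/

/-- A nonempty word `u` is a Lyndon (associative Lyndon–Shirshov) word if for every
factorization `u = v ++ w` into nonempty words, `vw > wv` lexicographically. -/
def IsLyndon {X : Type*} [LinearOrder X] (u : List X) : Prop :=
  u ≠ [] ∧ ∀ v w : List X, v ≠ [] → w ≠ [] → u = v ++ w →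
    List.Lex (· < ·) (w ++ v) (v ++ w)

namespace List

variable {X : Type*} [LinearOrder X] {x y z : List X}

def StrongLt (x y : List X) : Prop := ∀ t, x ++ t < y

theorem not_append_lt_self (x t : List X) : ¬ x ++ t < x := le_append_left

theorem append_lt_append_left_iff (p : List X) : p ++ x < p ++ y ↔ x < y :=
  (show StrictMono (p ++ ·) from fun _ _ => append_left_lt).lt_iff_lt

namespace StrongLt

theorem lt (h : StrongLt x y) : x < y := by simpa using h []

theorem append (c : List X) (h : StrongLt x y) : StrongLt (x ++ c) y := fun t => by
  simpa using h (c ++ t)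

theorem append_right (c : List X) (h : StrongLt x y) : StrongLt x (y ++ c) := fun t =>
  Lex.append_right _ c (h t)

theorem trans_lt (h : StrongLt x y) (h' : y < z) : StrongLt x z := fun t => (h t).trans h'

theorem trans (h : StrongLt x y) (h' : StrongLt y z) : StrongLt x z := h.trans_lt h'.lt

theorem of_append_left {p : List X} (h : StrongLt (p ++ x) (p ++ y)) : StrongLt x y := fun t =>
  (append_lt_append_left_iff p).1 (by simpa using h t)

end StrongLt

theorem prefix_or_prefix_or_strongLt_or_strongLt :
    ∀ x y : List X, x <+: y ∨ y <+: x ∨ StrongLt x y ∨ StrongLt y x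
  | [], _ => .inl nil_prefix
  | _, [] => .inr <| .inl nil_prefix
  | a :: x, b :: y => by
    rcases lt_trichotomy a b with h | rfl | h
    · exact .inr <| .inr <| .inl fun _ => .rel h
    · rcases prefix_or_prefix_or_strongLt_or_strongLt x y with h | h | h | h
      · exact .inl (cons_prefix_cons.2 ⟨rfl, h⟩)
      · exact .inr <| .inl (cons_prefix_cons.2 ⟨rfl, h⟩)
      · exact .inr <| .inr <| .inl fun t => .cons (h t)
      · exact .inr <| .inr <| .inr fun t => .cons (h t)
    · exact .inr <| .inr <| .inr fun _ => .rel h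

theorem strongLt_of_lt_of_length_eq (h : x < y) (hl : x.length = y.length) : StrongLt x y := by
  rcases prefix_or_prefix_or_strongLt_or_strongLt x y with hxy | hyx | hxy | hyx
  · exact absurd h (hxy.eq_of_length hl ▸ lt_irrefl x)
  · exact absurd h (hyx.eq_of_length hl.symm ▸ lt_irrefl y)
  · exact hxy
  · exact absurd hyx.lt h.not_gt

theorem StrongLt.strongLt_of_not_strongLt (h : StrongLt x z) (hy : ¬ StrongLt x y)
    (hl : x.length < y.length) : StrongLt y z := by
  rcases prefix_or_prefix_or_strongLt_or_strongLt x y with ⟨d, rfl⟩ | hyx | hxy | hyx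
  · exact h.append d
  · exact absurd hyx.length_le hl.not_ge
  · exact absurd hxy hy
  · exact hyx.trans h

end List

section Lyndon

open List

variable {X : Type*} [LinearOrder X] {u w : List X}

theorem IsLyndon.strongLt_of_eq_append {p s : List X} (hu : IsLyndon u) (hp : p ≠ [])
    (hs : s ≠ []) (h : u = p ++ s) : StrongLt s u := by
  have hrot : s ++ p < u := h ▸ hu.2 p s hp hs h
  rcases prefix_or_prefix_or_strongLt_or_strongLt s u with ⟨q, hq⟩ | hus | hsu | hus
  · exfalso
    have hlen : p.length = q.length := by
      have := congrArg length (h ▸ hq)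
      simp only [length_append] at this
      omega
    have hq0 : q ≠ [] := by rintro rfl; simp_all
    have hpq : StrongLt p q := strongLt_of_lt_of_length_eq
      ((append_lt_append_left_iff s).1 (hq ▸ hrot)) hlen
    have hrot' : q ++ s < u := hq ▸ hu.2 s q hs hq0 hq.symm
    exact lt_asymm hrot' (h ▸ ((hpq.append s).append_right s).lt)
  · exact absurd hus.length_le (by simpa [h] using hp)
  · exact hsu
  · exact (not_append_lt_self s p (hrot.trans hus.lt)).elim

theorem isLyndon_iff_strongLt :
    IsLyndon u ↔ u ≠ [] ∧ ∀ p s, p ≠ [] → s ≠ [] → u = p ++ s → StrongLt s u :=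
  ⟨fun hu => ⟨hu.1, fun _ _ hp hs h => hu.strongLt_of_eq_append hp hs h⟩,
    fun ⟨hu, H⟩ => ⟨hu, fun p s hp hs h => h ▸ H p s hp hs h p⟩⟩

theorem IsLyndon.exists_isLyndon_append (hw : IsLyndon w) (x : List X) (hx : x ≠ [])
    (hwx : StrongLt w (x ++ w)) : ∃ x₁ x₂, x = x₁ ++ x₂ ∧ x₂ ≠ [] ∧ IsLyndon (x₂ ++ w) := by
  induction hn : x.length using Nat.strong_induction_on generalizing x with
  | _ n ih =>
    by_cases hshorter : ∃ x₁ x₂, x = x₁ ++ x₂ ∧ x₁ ≠ [] ∧ x₂ ≠ [] ∧ StrongLt w (x₂ ++ w)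
    · obtain ⟨x₁, x₂, rfl, hx₁, hx₂, hwx₂⟩ := hshorter
      obtain ⟨y₁, y₂, rfl, hy₂, hL⟩ :=
        ih x₂.length (by simp [← hn, length_pos_iff.2 hx₁]) x₂ hx₂ hwx₂ rfl
      exact ⟨x₁ ++ y₁, y₂, by simp, hy₂, hL⟩
    push Not at hshorter
    refine ⟨[], x, rfl, hx, isLyndon_iff_strongLt.2 ⟨by simp [hx], fun p s hp hs hps => ?_⟩⟩
    rcases eq_or_ne s w with rfl | hsw
    · exact hwx
    rcases append_eq_append_iff.1 hps with ⟨a, rfl, rfl⟩ | ⟨c, rfl, rfl⟩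
    · have ha : a ≠ [] := by rintro rfl; simp at hsw
      exact (hw.strongLt_of_eq_append ha hs rfl).trans_lt hwx.lt
    · have hc : c ≠ [] := by rintro rfl; simp at hsw
      exact hwx.strongLt_of_not_strongLt (hshorter p c rfl hp hc) (by simp [length_pos_iff.2 hc])

end Lyndon

theorem stmt_1_general {X : Type*} [LinearOrder X] (u v w : List X)
    (hu : IsLyndon u)
    (hsplit : u = v ++ w) (hv : v ≠ []) (hwL : IsLyndon w)
    (hlongest : ∀ w' : List X, w' <:+ u → w' ≠ u → w' ≠ [] → IsLyndon w' →
      w'.length ≤ w.length) :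
    IsLyndon v := by
  refine isLyndon_iff_strongLt.2 ⟨hv, fun p s hp hs hps => ?_⟩
  have hsw : List.StrongLt (s ++ w) u :=
    hu.strongLt_of_eq_append hp (by simp [hs]) (by rw [hsplit, hps, List.append_assoc])
  rcases List.prefix_or_prefix_or_strongLt_or_strongLt s v with ⟨e, rfl⟩ | hvs | hsv | hvs
  · have he : e ≠ [] := by rintro rfl; simp_all
    have hwe : List.StrongLt w (e ++ w) :=
      .of_append_left (by rwa [hsplit, List.append_assoc] at hsw)
    obtain ⟨e₁, e₂, rfl, he₂, hL⟩ := hwL.exists_isLyndon_append e he hwe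
    have hne : e₂ ++ w ≠ u := fun h => by
      have := congrArg List.length h
      simp only [hsplit, List.length_append] at this
      have := List.length_pos_iff.2 hs
      omega
    have hlen := hlongest (e₂ ++ w) ⟨s ++ e₁, by simp [hsplit]⟩ hne (by simp [he₂]) hL
    simp [he₂] at hlen
  · exact absurd hvs.length_le (by simpa [hps] using hp)
  · exact hsv
  · have hws : List.StrongLt (s ++ w) s := hsw.trans (hsplit ▸ hvs.append w)
    exact (List.not_append_lt_self s w hws.lt).elim

/-- In the standard factorization  of a Lyndon word of length ≥ 2,
where  13:33:46 up 1 min,  0 user,  load average: 0.00, 0.00, 0.00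
USER     TTY      FROM             LOGIN@   IDLE   JCPU   PCPU WHAT is the longest proper Lyndon suffix, the factor  is Lyndon. -/
theorem stmt_1 {X : Type*} [LinearOrder X] (u v w : List X)
    (hu : IsLyndon u) (hlen : 2 ≤ u.length)
    (hsplit : u = v ++ w) (hv : v ≠ []) (hw : w ≠ []) (hwL : IsLyndon w)
    (hlongest : ∀ w' : List X, w' <:+ u → w' ≠ u → w' ≠ [] → IsLyndon w' →
      w'.length ≤ w.length) :
    IsLyndon v :=
  stmt_1_general u v w hu hsplit hv hwL hlongest
end

section
/- Viewing the free Lie algebra Lie(X) inside the free associative algebra k⟨X⟩ via (ab) = ab − ba, for every Lyndon–Shirshov word u the leading monomial (with respect to the degree-lexicographic order) of the standard bracketing [u] is u, and its coefficient is 1. -/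
/-- brk is a standard bracketing function: on letters it is the letter itself, and on a
Lyndon word of length ≥ 2 it is the commutator of the standard factorization. -/
def IsStandardBracketing {k X : Type*} [Field k] [LinearOrder X]
    (brk : List X → MonoidAlgebra k (FreeMonoid X)) : Prop :=
  (∀ x : X, brk [x] = MonoidAlgebra.single (FreeMonoid.ofList [x]) 1) ∧
  (∀ u v w : List X, IsLyndon u → 2 ≤ u.length → u = v ++ w → v ≠ [] → w ≠ [] →
    IsLyndon w →
    (∀ w' : List X, w' <:+ u → w' ≠ u → w' ≠ [] → IsLyndon w' → w'.length ≤ w.length) →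
    brk u = brk v * brk w - brk w * brk v)

namespace List

variable {α : Type*} {r : α → α → Prop}

theorem lex_append_left_iff [Std.Irrefl r] (l : List α) {s t : List α} :
    Lex r (l ++ s) (l ++ t) ↔ Lex r s t := by
  induction l with
  | nil => rfl
  | cons a l ih => rw [cons_append, cons_append, lex_cons_iff, ih]

theorem Lex.append_of_not_isPrefix {s t : List α} (h : Lex r s t) (hst : ¬ s <+: t)
    (s' t' : List α) : Lex r (s ++ s') (t ++ t') := by
  induction h with
  | nil => exact absurd nil_prefix hst
  | cons _ ih => exact .cons (ih fun hp => hst (cons_prefix_cons.2 ⟨rfl, hp⟩))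
  | rel h => exact .rel h

theorem Lex.append_of_length_eq {s t : List α} (h : Lex r s t) (hlen : s.length = t.length)
    (s' t' : List α) : Lex r (s ++ s') (t ++ t') := by
  induction h with
  | nil => simp at hlen
  | cons _ ih => exact .cons (ih (by simpa using hlen))
  | rel h => exact .rel h

theorem Lex.of_append_of_not_isPrefix {s t s' t' : List α} (h : Lex r (s ++ s') (t ++ t'))
    (hts : ¬ t <+: s) (hlen : t.length ≤ s.length) : Lex r s t := by
  induction s generalizing t with
  | nil => exact absurd (eq_nil_of_length_eq_zero (Nat.le_zero.1 hlen) ▸ nil_prefix) hts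
  | cons a s ih =>
    rcases t with _ | ⟨b, t⟩
    · exact absurd nil_prefix hts
    · cases h with
      | cons h =>
        exact .cons (ih h (fun hp => hts (cons_prefix_cons.2 ⟨rfl, hp⟩)) (by simpa using hlen))
      | rel h => exact .rel h

theorem Lex.swap_of_length_eq {s t : List α} (h : Lex r s t) (hlen : s.length = t.length) :
    Lex (flip r) t s := by
  induction h with
  | nil => simp at hlen
  | cons _ ih => exact .cons (ih (by simpa using hlen))
  | rel h => exact .rel h

theorem append_le_append_of_length_eq [LinearOrder α] {a b v w : List α} (hav : a ≤ v) (hbw : b ≤ w)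
    (hlen : a.length = v.length) : a ++ b ≤ v ++ w := by
  rcases hav.lt_or_eq with hav | rfl
  · exact le_of_lt (Lex.append_of_length_eq hav hlen b w)
  · rcases hbw.lt_or_eq with hbw | rfl
    · exact le_of_lt (Lex.append_left _ hbw a)
    · rfl

end List

section Lyndon

open List

variable {X : Type*} [LinearOrder X] {u v w : List X}

theorem IsLyndon.lex_gt_of_eq_append (hu : IsLyndon u) (hv : v ≠ []) (hw : w ≠ [])
    (huvw : u = v ++ w) : Lex (· > ·) u w := by
  have hvw : Lex (· > ·) (v ++ w) (w ++ v) :=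
    (hu.2 v w hv hw huvw).swap_of_length_eq (by simp [Nat.add_comm])
  subst huvw
  by_cases hpre : w <+: v ++ w
  -- then `u = w ++ m` too, and the rotations at `v` and at `w` contradict each other
  · obtain ⟨m, hm⟩ := hpre
    have hm0 : m ≠ [] := by
      rintro rfl
      exact hv (by simpa using hm)
    have hlen : m.length = v.length := by have := congrArg length hm; simp at this; omega
    have hwm : Lex (· > ·) (w ++ m) (m ++ w) :=
      (hu.2 w m hw hm0 hm.symm).swap_of_length_eq (by simp [Nat.add_comm])
    have hmv : Lex (· > ·) m v := (lex_append_left_iff w).1 (hm ▸ hvw)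
    have hmw : Lex (· > ·) (m ++ w) (w ++ m) := hm ▸ hmv.append_of_length_eq hlen w w
    exact absurd hwm (asymm hmw)
  · exact Lex.of_append_of_not_isPrefix (s' := []) (t' := v) (by simpa using hvw) hpre (by simp)

theorem isLyndon_of_lex_gt_suffix (hu : u ≠ [])
    (H : ∀ v w, v ≠ [] → w ≠ [] → u = v ++ w → Lex (· > ·) u w) : IsLyndon u := by
  refine ⟨hu, fun v w hv hw huvw => ?_⟩
  have hlen : w.length < u.length := by
    simpa [huvw] using length_pos_iff.2 hv
  have hnp : ¬ u <+: w := fun hp => absurd hp.length_le (by omega)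
  have h := (H v w hv hw huvw).append_of_not_isPrefix hnp [] v
  rw [append_nil, huvw] at h
  exact h.swap_of_length_eq (by simp [Nat.add_comm])

def IsLeastSuffixSplit (u v w : List X) : Prop :=
  u = v ++ w ∧ v ≠ [] ∧ w ≠ [] ∧
    ∀ p s, p ≠ [] → s ≠ [] → u = p ++ s → ¬ Lex (· > ·) s w

theorem exists_isLeastSuffixSplit (hu : 2 ≤ u.length) : ∃ v w, IsLeastSuffixSplit u v w := by
  have : IsStrictOrder (List X) (Lex (· > ·)) :=
    { irrefl := lex_irrefl (lt_irrefl ·)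
      trans := fun _ _ _ => lex_trans (fun h₁ h₂ => h₂.trans h₁) }
  let S : Set (List X) := {s | ∃ p, p ≠ [] ∧ s ≠ [] ∧ u = p ++ s}
  have hfin : S.Finite :=
    u.tails.finite_toSet.subset fun s ⟨p, _, _, h⟩ => (mem_tails _ _).2 ⟨p, h.symm⟩
  obtain ⟨a, t, rfl⟩ := exists_cons_of_ne_nil (ne_nil_of_length_pos (by omega : 0 < u.length))
  have hne : S.Nonempty := ⟨t, [a], by simp, ne_nil_of_length_pos (by simp at hu; omega), rfl⟩
  obtain ⟨w, ⟨v, hv, hw, huvw⟩, hmin⟩ :=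
    (Set.wellFoundedOn_iff.1 (hfin.wellFoundedOn (r := Lex (· > ·)))).has_min S hne
  exact ⟨v, w, huvw, hv, hw, fun p s hp hs hps hsw =>
    hmin s ⟨p, hp, hs, hps⟩ ⟨hsw, ⟨p, hp, hs, hps⟩, v, hv, hw, huvw⟩⟩

namespace IsLeastSuffixSplit

theorem isLyndon_right (h : IsLeastSuffixSplit u v w) : IsLyndon w := by
  obtain ⟨huvw, hv, hw, hmin⟩ := h
  refine isLyndon_of_lex_gt_suffix hw fun q s hq hs hwqs => ?_
  have hsw : s ≠ w := by
    rintro rfl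
    exact hq (by simpa using congrArg length hwqs)
  rcases trichotomous_of (Lex (· > ·)) w s with hws | rfl | hsw'
  · exact hws
  · exact absurd rfl hsw
  · exact absurd hsw' (hmin (v ++ q) s (by simp [hv]) hs (by rw [huvw, hwqs, append_assoc]))

theorem length_le_of_isLyndon (h : IsLeastSuffixSplit u v w) {w' : List X}
    (hsuf : w' <:+ u) (hne : w' ≠ u) (hw' : IsLyndon w') : w'.length ≤ w.length := by
  obtain ⟨huvw, hv, hw, hmin⟩ := h
  obtain ⟨p, hp⟩ := hsuf
  by_contra! hlt
  obtain ⟨q, hq⟩ : w <:+ w' :=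
    suffix_of_suffix_length_le ⟨v, huvw.symm⟩ ⟨p, hp⟩ hlt.le
  refine hmin p w' (by rintro rfl; simp_all) hw'.1 hp.symm (hw'.lex_gt_of_eq_append ?_ hw hq.symm)
  rintro rfl
  rw [nil_append] at hq
  exact hlt.ne (by rw [hq])

theorem isLyndon_left (h : IsLeastSuffixSplit u v w) (hu : IsLyndon u) : IsLyndon v := by
  obtain ⟨huvw, hv, hw, hmin⟩ := h
  refine isLyndon_of_lex_gt_suffix hv fun p t hp ht hvpt => ?_
  have hlen : t.length ≤ v.length := by simp [hvpt]
  have hu_tw : Lex (· > ·) (v ++ w) (t ++ w) :=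
    huvw ▸ hu.lex_gt_of_eq_append hp (by simp [ht]) (by rw [huvw, hvpt, append_assoc])
  by_cases hpre : t <+: v
  · obtain ⟨r, rfl⟩ := hpre
    have hr : r ≠ [] := by
      rintro rfl
      exact hp (by simpa using congrArg length hvpt)
    rw [append_assoc] at hu_tw
    exact absurd ((lex_append_left_iff t).1 hu_tw)
      (hmin t (r ++ w) ht (by simp [hw]) (by rw [huvw, append_assoc]))
  · exact Lex.of_append_of_not_isPrefix hu_tw hpre hlen

end IsLeastSuffixSplit

end Lyndon

section LeadingWord

open List FreeMonoid MonoidAlgebra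

section Semiring

variable {k X : Type*} [Semiring k] {f g : MonoidAlgebra k (FreeMonoid X)}

theorem exists_append_of_coeff_mul_ne_zero {m : List X} (hm : (f * g).coeff (ofList m) ≠ 0) :
    ∃ a b, m = a ++ b ∧ f.coeff (ofList a) ≠ 0 ∧ g.coeff (ofList b) ≠ 0 := by
  classical
  obtain ⟨a, ha, b, hb, hab⟩ :=
    Finset.mem_mul.1 (support_coeff_mul_subset f g (Finsupp.mem_support_iff.2 hm))
  refine ⟨a.toList, b.toList, ?_, by simpa using ha, by simpa using hb⟩
  rw [← toList_mul, hab, toList_ofList]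

theorem coeff_mul_append {v w : List X}
    (hf : ∀ a, f.coeff (ofList a) ≠ 0 → a.length = v.length) :
    (f * g).coeff (ofList (v ++ w)) = f.coeff (ofList v) * g.coeff (ofList w) := by
  rw [ofList_append]
  refine coeff_mul_mul_of_uniqueMul fun a b ha _ hab => ?_
  have hab' : a.toList ++ b.toList = v ++ w := by simpa using congrArg toList hab
  obtain ⟨ha', hb'⟩ := append_inj hab' (hf a.toList (by simpa using ha))
  exact ⟨by rw [← ha', ofList_toList], by rw [← hb', ofList_toList]⟩

end Semiring

variable {k X : Type*} [LinearOrder X]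

def SupportLE [Semiring k] (f : MonoidAlgebra k (FreeMonoid X)) (u : List X) : Prop :=
  ∀ m : List X, f.coeff (ofList m) ≠ 0 → m.length = u.length ∧ m ≤ u

def HasLeadingWord [Semiring k] (f : MonoidAlgebra k (FreeMonoid X)) (u : List X) : Prop :=
  f.coeff (ofList u) = 1 ∧ SupportLE f u

section Semiring

variable [Semiring k] {f g : MonoidAlgebra k (FreeMonoid X)} {u v w : List X}

namespace SupportLE

theorem coeff_eq_zero (hf : SupportLE f v) (hvu : v < u) : f.coeff (ofList u) = 0 := by
  by_contra hu
  exact (hf u hu).2.not_gt hvu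

theorem mono (hf : SupportLE f v) (hvu : v ≤ u) (hlen : v.length = u.length) :
    SupportLE f u := fun m hm => ⟨(hf m hm).1.trans hlen, (hf m hm).2.trans hvu⟩

theorem mul (hf : SupportLE f v) (hg : SupportLE g w) : SupportLE (f * g) (v ++ w) := by
  intro m hm
  obtain ⟨a, b, rfl, ha, hb⟩ := exists_append_of_coeff_mul_ne_zero hm
  obtain ⟨hav, hav'⟩ := hf a ha
  obtain ⟨hbw, hbw'⟩ := hg b hb
  exact ⟨by simp [hav, hbw], append_le_append_of_length_eq hav' hbw' hav⟩

end SupportLE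

theorem hasLeadingWord_single (u : List X) :
    HasLeadingWord (single (ofList u) (1 : k)) u := by
  classical
  refine ⟨by simp, fun m hm => ?_⟩
  rw [coeff_single, Finsupp.single_apply, ite_ne_right_iff] at hm
  obtain rfl := ofList.injective hm.1.symm
  exact ⟨rfl, le_rfl⟩

end Semiring

section Ring

variable [Ring k] {f g : MonoidAlgebra k (FreeMonoid X)} {u v w : List X}

theorem SupportLE.sub (hf : SupportLE f u) (hg : SupportLE g u) : SupportLE (f - g) u := by
  intro m hm
  rw [coeff_sub, Finsupp.sub_apply] at hm
  by_cases hfm : f.coeff (ofList m) = 0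
  · exact hg m (by simpa [hfm] using hm)
  · exact hf m hfm

theorem HasLeadingWord.commutator (hf : HasLeadingWord f v) (hg : HasLeadingWord g w)
    (hwv : w ++ v < v ++ w) : HasLeadingWord (f * g - g * f) (v ++ w) := by
  have hgf := hg.2.mul hf.2
  refine ⟨?_, (hf.2.mul hg.2).sub (hgf.mono hwv.le (by simp [Nat.add_comm]))⟩
  rw [coeff_sub, Finsupp.sub_apply, hgf.coeff_eq_zero hwv, sub_zero,
    coeff_mul_append fun a ha => (hf.2 a ha).1, hf.1, hg.1, one_mul]

end Ring

end LeadingWord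

theorem IsStandardBracketing.hasLeadingWord {k X : Type*} [Field k] [LinearOrder X]
    {brk : List X → MonoidAlgebra k (FreeMonoid X)} (hbrk : IsStandardBracketing brk)
    {u : List X} (hu : IsLyndon u) : HasLeadingWord (brk u) u := by
  induction hn : u.length using Nat.strong_induction_on generalizing u with
  | _ n ih =>
  obtain ⟨x, rfl⟩ | h2 : (∃ x, u = [x]) ∨ 2 ≤ u.length := by
    rcases u with _ | ⟨x, _ | ⟨y, t⟩⟩
    · exact absurd rfl hu.1
    · exact .inl ⟨x, rfl⟩
    · exact .inr (by simp)
  · exact hbrk.1 x ▸ hasLeadingWord_single [x]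
  obtain ⟨v, w, hs⟩ := exists_isLeastSuffixSplit h2
  obtain ⟨huvw, hv, hw, -⟩ := id hs
  have hlen : v.length < n ∧ w.length < n := by
    simp only [← hn, huvw, List.length_append, ← List.length_pos_iff] at hv hw ⊢
    omega
  rw [hbrk.2 u v w hu h2 huvw hv hw hs.isLyndon_right
    fun w' hsuf hne _ hw' => hs.length_le_of_isLyndon hsuf hne hw', huvw]
  exact (ih _ hlen.1 (hs.isLyndon_left hu) rfl).commutator (ih _ hlen.2 hs.isLyndon_right rfl)
    (hu.2 v w hv hw huvw)

/-- For a Lyndon word u, the leading monomial (deg-lex) of its standard bracketing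
is u, with coefficient 1: the coefficient of u in brk u is 1, and every other word
occurring in brk u is smaller than u in deg-lex order. -/
theorem stmt_8 {k X : Type*} [Field k] [LinearOrder X]
    (brk : List X → MonoidAlgebra k (FreeMonoid X))
    (hbrk : IsStandardBracketing brk)
    (u : List X) (hu : IsLyndon u) :
    (brk u).coeff (FreeMonoid.ofList u) = 1 ∧
      ∀ m : List X, (brk u).coeff (FreeMonoid.ofList m) ≠ 0 →
        m = u ∨ m.length < u.length ∨
          (m.length = u.length ∧ List.Lex (· < ·) m u) := by
  obtain ⟨hcoeff, hsupp⟩ := hbrk.hasLeadingWord hu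
  refine ⟨hcoeff, fun m hm => ?_⟩
  obtain ⟨hlen, hle⟩ := hsupp m hm
  exact hle.eq_or_lt.imp id fun hlt => .inr ⟨hlen, hlt⟩
end

section
/- Let x, y ∈ X with x > y, and u ∈ X* with every letter of u strictly smaller than y. Then xuy is a Lyndon word. -/
/-- Every rotation `w ++ v` of `x :: l` starts with a letter of `l`, which is smaller than the
first letter `x` of `v ++ w`. -/
theorem isLyndon_cons_of_forall_lt {X : Type*} [LinearOrder X] {x : X} {l : List X}
    (hl : ∀ z ∈ l, z < x) : IsLyndon (x :: l) := by
  refine ⟨List.cons_ne_nil x l, fun v w hv hw hvw => ?_⟩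
  obtain ⟨a, v', rfl⟩ := List.exists_cons_of_ne_nil hv
  obtain ⟨b, w', rfl⟩ := List.exists_cons_of_ne_nil hw
  obtain ⟨rfl, hl_eq⟩ := List.cons_eq_cons.mp hvw
  have hb : b ∈ l := by simp [hl_eq]
  exact List.Lex.rel (hl b hb)

/-- If  and every letter of  is , then  is a Lyndon word. -/
theorem stmt_15 {X : Type*} [LinearOrder X] (x y : X) (u : List X)
    (hxy : y < x) (hu : ∀ z ∈ u, z < y) :
    IsLyndon (x :: u ++ [y]) := by
  refine isLyndon_cons_of_forall_lt fun z hz => ?_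
  rcases List.mem_append.mp hz with hzu | hzy
  · exact (hu z hzu).trans hxy
  · rwa [List.mem_singleton.mp hzy]
end
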